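/- Let T = ⟨Tree, ⊴⟩ be a temporal frame and let CS be a constant specification. Then every model M ∈ Mod_CS({T}) validates every formula A with ⊢_CS A if and only if T is a mixed successor frame. -/

import Mathlib

/-! Preliminaries: temporal frames, stit frames, jstit frames, the language of
JA-STIT, jstit models, satisfaction, and the Hilbert system Σ_D(CS). -/

/-- A temporal frame: a nonempty set of moments with a partial order satisfying
historical connection and no backward branching. -/
structure TemporalFrame (Mo : Type) : Type where
  le : Mo → Mo → Prop
  le_refl : ∀ m, le m m
  le_antisymm : ∀ {m m'}, le m m' → le m' m → m = m'
  le_trans : ∀ {m1 m2 m3}, le m1 m2 → le m2 m3 → le m1 m3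
  nonempty : Nonempty Mo
  hist_conn : ∀ m m1, ∃ m2, le m2 m ∧ le m2 m1
  no_backward : ∀ m m1 m2, le m1 m → le m2 m → le m1 m2 ∨ le m2 m1

namespace TemporalFrame

variable {Mo : Type} (T : TemporalFrame Mo)

/-- The strict companion of the temporal order. -/
def lt (m m' : Mo) : Prop := T.le m m' ∧ m ≠ m'

/-- A history is a maximal chain of moments w.r.t. the temporal order. -/
def IsHistory (h : Set Mo) : Prop :=
  IsChain T.le h ∧ ∀ h' : Set Mo, IsChain T.le h' → h ⊆ h' → h' = h

/-- `T.H m` is the set of histories passing through the moment `m`. -/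
def H (m : Mo) : Set (Set Mo) := { h | T.IsHistory h ∧ m ∈ h }

/-- Histories `h` and `g` are undivided at `m`. -/
def Undiv (m : Mo) (h g : Set Mo) : Prop := ∃ m', T.lt m m' ∧ m' ∈ h ∧ m' ∈ g

/-- `m'` is an immediate successor of `m`. -/
def Next (m m' : Mo) : Prop := T.lt m m' ∧ ∀ m'', T.lt m'' m' → T.le m'' m

/-- Mixed successor condition on (the temporal part of) a frame. -/
def MixSucc : Prop :=
  ∀ m m1 : Mo,
    (T.lt m m1 → ∃ m2, T.le m2 m1 ∧ T.Next m m2) ∨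
    (∀ h ∈ T.H m, ∀ g ∈ T.H m, T.Undiv m h g)

end TemporalFrame

/-- A stit frame for an agent community `Ag`: a temporal frame together with a choice
function assigning to each moment and agent a partition of the histories through that
moment, subject to no choice between undivided histories and independence of agents. -/
structure StitFrame (Mo : Type) (Ag : Type) extends TemporalFrame Mo where
  choice : Mo → Ag → Set (Set (Set Mo))
  choice_cell_nonempty : ∀ m j C, C ∈ choice m j → C.Nonempty
  choice_cell_sub : ∀ m j C, C ∈ choice m j → C ⊆ toTemporalFrame.H m
  choice_cover : ∀ m j h, h ∈ toTemporalFrame.H m → ∃ C ∈ choice m j, h ∈ C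
  choice_disjoint : ∀ m j C C', C ∈ choice m j → C' ∈ choice m j →
    (C ∩ C').Nonempty → C = C'
  no_choice_undiv : ∀ m j h h', h ∈ toTemporalFrame.H m → h' ∈ toTemporalFrame.H m →
    toTemporalFrame.Undiv m h h' → ∀ C ∈ choice m j, h ∈ C → h' ∈ C
  independence : ∀ m (f : Ag → Set (Set Mo)), (∀ j, f j ∈ choice m j) →
    (⋂ j, f j).Nonempty

/-- A justification stit (jstit) frame for `Ag`: a stit frame together with two
epistemic preorders `R ⊆ R_e`, with the temporal order included in `R`. -/
structure JstitFrame (Mo : Type) (Ag : Type) extends StitFrame Mo Ag where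
  R : Mo → Mo → Prop
  Re : Mo → Mo → Prop
  R_refl : ∀ m, R m m
  R_trans : ∀ {m1 m2 m3}, R m1 m2 → R m2 m3 → R m1 m3
  Re_refl : ∀ m, Re m m
  Re_trans : ∀ {m1 m2 m3}, Re m1 m2 → Re m2 m3 → Re m1 m3
  R_sub_Re : ∀ {m m'}, R m m' → Re m m'
  le_sub_R : ∀ {m m'}, le m m' → R m m'

namespace JstitFrame

variable {Mo : Type} {Ag : Type} (F : JstitFrame Mo Ag)

/-- The family `Θ_m` of subsets of the set of moments associated with a moment `m`. -/
def Theta (m : Mo) : Set (Set Mo) :=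
  { S | m ∈ S ∧
    (∀ m1 m2, m1 ∈ S → F.Re m1 m2 → m2 ∈ S) ∧
    (∀ m1, (∀ h ∈ F.toTemporalFrame.H m1,
        ∃ m2 ∈ h, F.toTemporalFrame.Next m1 m2 ∧ m2 ∈ S) → m1 ∈ S) ∧
    (∀ m1, m1 ∈ S →
      (∀ m2, F.toTemporalFrame.lt m2 m1 →
        ∃ m3, F.toTemporalFrame.lt m2 m3 ∧ F.toTemporalFrame.lt m3 m1) →
      ∃ m4, F.toTemporalFrame.lt m4 m1 ∧ m4 ∈ S) }

/-- A jstit frame is unirelational iff `R_e ⊆ R`. -/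
def Unirelational : Prop := ∀ m m', F.Re m m' → F.R m m'

/-- Regularity of a jstit frame. -/
def Regular : Prop :=
  ∀ m m1 : Mo, F.toTemporalFrame.lt m m1 →
    (∃ S : Set Mo,
      (∀ m0, F.toTemporalFrame.lt m m0 → F.le m0 m1 → S ∈ F.Theta m0) ∧
      m ∉ S ∧
      ∃ h' ∈ F.toTemporalFrame.H m,
        (∀ g ∈ F.toTemporalFrame.H m1, ¬ F.toTemporalFrame.Undiv m h' g) ∧
        (∀ m' ∈ h', F.toTemporalFrame.Next m m' → m' ∉ S)) →
    ∃ m2, F.le m2 m1 ∧ F.toTemporalFrame.Next m m2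

end JstitFrame

/-- Proof polynomials over proof variables `PVar` and proof constants `PConst`. -/
inductive Pol (PVar PConst : Type) : Type
  | var : PVar → Pol PVar PConst
  | const : PConst → Pol PVar PConst
  | plus : Pol PVar PConst → Pol PVar PConst → Pol PVar PConst
  | times : Pol PVar PConst → Pol PVar PConst → Pol PVar PConst
  | bang : Pol PVar PConst → Pol PVar PConst

/-- Formulas of JA-STIT. -/
inductive Form (Ag PVar PConst PropVar : Type) : Type
  | pv : PropVar → Form Ag PVar PConst PropVar
  | and : Form Ag PVar PConst PropVar → Form Ag PVar PConst PropVar →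
      Form Ag PVar PConst PropVar
  | neg : Form Ag PVar PConst PropVar → Form Ag PVar PConst PropVar
  | stit : Ag → Form Ag PVar PConst PropVar → Form Ag PVar PConst PropVar
  | box : Form Ag PVar PConst PropVar → Form Ag PVar PConst PropVar
  | proves : Pol PVar PConst → Form Ag PVar PConst PropVar → Form Ag PVar PConst PropVar
  | know : Form Ag PVar PConst PropVar → Form Ag PVar PConst PropVar
  | ann : Pol PVar PConst → Form Ag PVar PConst PropVar

namespace Form

variable {Ag PVar PConst PropVar : Type}

/-- Implication, defined as usual from `¬` and `∧`. -/
def imp (A B : Form Ag PVar PConst PropVar) : Form Ag PVar PConst PropVar :=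
  neg (and A (neg B))

/-- Disjunction, defined as usual. -/
def or (A B : Form Ag PVar PConst PropVar) : Form Ag PVar PConst PropVar :=
  neg (and (neg A) (neg B))

/-- The dual `◇` of the historical necessity modality. -/
def dia (A : Form Ag PVar PConst PropVar) : Form Ag PVar PConst PropVar :=
  neg (box (neg A))

/-- Falsum, defined as usual. -/
def bot [Inhabited PropVar] : Form Ag PVar PConst PropVar :=
  and (pv default) (neg (pv default))

end Form

/-- Conjunction of a nonempty list of formulas (head plus tail). -/
def andList {Ag PVar PConst PropVar : Type} :
    Form Ag PVar PConst PropVar → List (Form Ag PVar PConst PropVar) →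
      Form Ag PVar PConst PropVar
  | A, [] => A
  | A, B :: L => Form.and A (andList B L)

/-- Disjunction of a list of formulas. -/
def bigOr {Ag PVar PConst PropVar : Type} [Inhabited PropVar] :
    List (Form Ag PVar PConst PropVar) → Form Ag PVar PConst PropVar
  | [] => Form.bot
  | [A] => A
  | A :: B :: L => Form.or A (bigOr (B :: L))

/-- A classical propositional tautology: a formula true under every Boolean valuation
commuting with `∧` and `¬` (all other formulas being treated as atoms). -/
def Tautology {Ag PVar PConst PropVar : Type} (A : Form Ag PVar PConst PropVar) : Prop :=
  ∀ v : Form Ag PVar PConst PropVar → Bool,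
    (∀ B C, v (Form.and B C) = (v B && v C)) →
    (∀ B, v (Form.neg B) = !v B) →
    v A = true

/-- The axiom schemes (A0)–(A9) of Σ_D. -/
inductive Ax {Ag PVar PConst PropVar : Type} : Form Ag PVar PConst PropVar → Prop
  -- (A0) classical propositional tautologies
  | a0 {A} : Tautology A → Ax A
  -- (A1) S5 axioms for □
  | boxK {A B} : Ax (Form.imp (Form.box (Form.imp A B))
      (Form.imp (Form.box A) (Form.box B)))
  | boxT {A} : Ax (Form.imp (Form.box A) A)
  | box4 {A} : Ax (Form.imp (Form.box A) (Form.box (Form.box A)))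
  | box5 {A} : Ax (Form.imp (Form.neg (Form.box A)) (Form.box (Form.neg (Form.box A))))
  -- (A1) S5 axioms for each [j]
  | stitK {j : Ag} {A B} : Ax (Form.imp (Form.stit j (Form.imp A B))
      (Form.imp (Form.stit j A) (Form.stit j B)))
  | stitT {j : Ag} {A} : Ax (Form.imp (Form.stit j A) A)
  | stit4 {j : Ag} {A} : Ax (Form.imp (Form.stit j A) (Form.stit j (Form.stit j A)))
  | stit5 {j : Ag} {A} : Ax (Form.imp (Form.neg (Form.stit j A))
      (Form.stit j (Form.neg (Form.stit j A))))
  -- (A2)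
  | a2 {j : Ag} {A} : Ax (Form.imp (Form.box A) (Form.stit j A))
  -- (A3), for pairwise distinct agents
  | a3 {p : Ag × Form Ag PVar PConst PropVar} {L : List (Ag × Form Ag PVar PConst PropVar)} :
      (((p :: L).map Prod.fst).Nodup) →
      Ax (Form.imp
        (andList (Form.dia (Form.stit p.1 p.2)) (L.map fun q => Form.dia (Form.stit q.1 q.2)))
        (Form.dia (andList (Form.stit p.1 p.2) (L.map fun q => Form.stit q.1 q.2))))
  -- (A4)
  | a4 {s t : Pol PVar PConst} {A B} : Ax (Form.imp (Form.proves s (Form.imp A B))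
      (Form.imp (Form.proves t A) (Form.proves (Pol.times s t) B)))
  -- (A5)
  | a5 {t : Pol PVar PConst} {A} : Ax (Form.imp (Form.proves t A)
      (Form.and (Form.proves (Pol.bang t) (Form.proves t A)) (Form.know A)))
  -- (A6)
  | a6 {s t : Pol PVar PConst} {A} : Ax (Form.imp
      (Form.or (Form.proves s A) (Form.proves t A)) (Form.proves (Pol.plus s t) A))
  -- (A7) S4 axioms for K
  | knowK {A B} : Ax (Form.imp (Form.know (Form.imp A B))
      (Form.imp (Form.know A) (Form.know B)))
  | knowT {A} : Ax (Form.imp (Form.know A) A)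
  | know4 {A} : Ax (Form.imp (Form.know A) (Form.know (Form.know A)))
  -- (A8)
  | a8 {A} : Ax (Form.imp (Form.know A) (Form.box (Form.know (Form.box A))))
  -- (A9)
  | a9 {t : Pol PVar PConst} : Ax (Form.imp (Form.box (Form.ann t))
      (Form.know (Form.box (Form.ann t))))

/-- Iterated prefixes `c_n : … : c_1 : A` of instances `A` of the axiom schemes. -/
inductive ConstIter {Ag PVar PConst PropVar : Type} : Form Ag PVar PConst PropVar → Prop
  | base {c : PConst} {A} : Ax A → ConstIter (Form.proves (Pol.const c) A)
  | step {c : PConst} {B} : ConstIter B → ConstIter (Form.proves (Pol.const c) B)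

/-- A constant specification: a set of formulas of the form `c_n : … : c_1 : A` with `A`
an instance of (A0)–(A9), closed under deleting the outermost constant. -/
def IsConstSpec {Ag PVar PConst PropVar : Type}
    (CS : Set (Form Ag PVar PConst PropVar)) : Prop :=
  (∀ B ∈ CS, ConstIter B) ∧
  ∀ (c c' : PConst) (B : Form Ag PVar PConst PropVar),
    Form.proves (Pol.const c) (Form.proves (Pol.const c') B) ∈ CS →
    Form.proves (Pol.const c') B ∈ CS

/-- Provability in Σ_D(CS): axioms (A0)–(A9), modus ponens (R1), K-necessitation (R2),
the rule (R_D) and the rule (R_CS). -/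
inductive Proves {Ag PVar PConst PropVar : Type} [Inhabited PropVar]
    (CS : Set (Form Ag PVar PConst PropVar)) : Form Ag PVar PConst PropVar → Prop
  | ax {A} : Ax A → Proves CS A
  | mp {A B} : Proves CS (Form.imp A B) → Proves CS A → Proves CS B
  | nec {A} : Proves CS A → Proves CS (Form.know A)
  | rd {A : Form Ag PVar PConst PropVar} {ts ss : List (Pol PVar PConst)}
      (hne : ts ++ ss ≠ []) :
      Proves CS (Form.imp (Form.know A)
        (bigOr ((ts.map fun t => Form.neg (Form.box (Form.ann t))) ++
                (ss.map fun s => Form.box (Form.ann s))))) →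
      Proves CS (Form.imp (Form.know A)
        (bigOr ((ts.map fun t => Form.neg (Form.ann t)) ++
                (ss.map fun s => Form.ann s))))
  | rcs {B} : B ∈ CS → Proves CS B

/-- Γ is consistent in Σ_D(CS): no finite nonempty conjunction of members of Γ provably
implies falsum. -/
def CSConsistent {Ag PVar PConst PropVar : Type} [Inhabited PropVar]
    (CS Γ : Set (Form Ag PVar PConst PropVar)) : Prop :=
  ¬ ∃ (A : Form Ag PVar PConst PropVar) (L : List (Form Ag PVar PConst PropVar)),
      A ∈ Γ ∧ (∀ B ∈ L, B ∈ Γ) ∧ Proves CS (Form.imp (andList A L) Form.bot)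

/-- A jstit model for `Ag`: a jstit frame together with `Act`, an admissible evidence
function `E` and an evaluation `V`, subject to the semantical constraints. -/
structure JstitModel (Mo : Type) (Ag PVar PConst PropVar : Type)
    extends JstitFrame Mo Ag where
  act : Mo → Set Mo → Set (Pol PVar PConst)
  ev : Mo → Pol PVar PConst → Set (Form Ag PVar PConst PropVar)
  val : PropVar → Set (Mo × Set Mo)
  -- monotonicity of evidence
  ev_mono : ∀ m m' t, Re m m' → ev m t ⊆ ev m' t
  -- evidence closure properties
  ev_app : ∀ m s t A B, Form.imp A B ∈ ev m s → A ∈ ev m t → B ∈ ev m (Pol.times s t)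
  ev_sum_left : ∀ m s t, ev m s ⊆ ev m (Pol.plus s t)
  ev_sum_right : ∀ m s t, ev m t ⊆ ev m (Pol.plus s t)
  ev_bang : ∀ m t A, A ∈ ev m t → Form.proves t A ∈ ev m (Pol.bang t)
  -- expansion of presented proofs
  expansion : ∀ m m' h, toTemporalFrame.lt m' m → h ∈ toTemporalFrame.H m →
    act m' h ⊆ act m h
  -- no new proofs guaranteed
  no_new : ∀ m t, (∀ h ∈ toTemporalFrame.H m, t ∈ act m h) →
    ∃ m' h, toTemporalFrame.lt m' m ∧ h ∈ toTemporalFrame.H m ∧ t ∈ act m' h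
  -- presenting a new proof makes histories divide
  divide : ∀ m h h', h ∈ toTemporalFrame.H m → h' ∈ toTemporalFrame.H m →
    toTemporalFrame.Undiv m h h' → act m h = act m h'
  -- presented proofs are epistemically transparent
  transparent : ∀ m m' t, Re m m' → (∀ h ∈ toTemporalFrame.H m, t ∈ act m h) →
    ∀ h' ∈ toTemporalFrame.H m', t ∈ act m' h'

namespace JstitModel

variable {Mo Ag PVar PConst PropVar : Type}

/-- `Act_m`, the set of proofs presented at `m` under every history through `m`. -/
def ActM (M : JstitModel Mo Ag PVar PConst PropVar) (m : Mo) : Set (Pol PVar PConst) :=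
  { t | ∀ h ∈ M.toTemporalFrame.H m, t ∈ M.act m h }

/-- The satisfaction relation for jstit models. -/
def Sat (M : JstitModel Mo Ag PVar PConst PropVar) :
    Form Ag PVar PConst PropVar → Mo → Set Mo → Prop
  | Form.pv p, m, h => (m, h) ∈ M.val p
  | Form.and A B, m, h => M.Sat A m h ∧ M.Sat B m h
  | Form.neg A, m, h => ¬ M.Sat A m h
  | Form.stit j A, m, h => ∀ h' C, C ∈ M.choice m j → h ∈ C → h' ∈ C → M.Sat A m h'
  | Form.box A, m, _ => ∀ h' ∈ M.toTemporalFrame.H m, M.Sat A m h'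
  | Form.know A, m, _ => ∀ m' h', M.R m m' → h' ∈ M.toTemporalFrame.H m' → M.Sat A m' h'
  | Form.proves t A, m, _ => A ∈ M.ev m t ∧
      ∀ m' h', M.Re m m' → h' ∈ M.toTemporalFrame.H m' → M.Sat A m' h'
  | Form.ann t, m, h => t ∈ M.act m h

/-- Validity of a formula in a jstit model. -/
def Valid (M : JstitModel Mo Ag PVar PConst PropVar)
    (A : Form Ag PVar PConst PropVar) : Prop :=
  ∀ m h, h ∈ M.toTemporalFrame.H m → M.Sat A m h

end JstitModel

/-- CS-normality of a jstit model. -/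
def CSNormal {Mo Ag PVar PConst PropVar : Type}
    (CS : Set (Form Ag PVar PConst PropVar))
    (M : JstitModel Mo Ag PVar PConst PropVar) : Prop :=
  ∀ (c : PConst) (m : Mo) (A : Form Ag PVar PConst PropVar),
    Form.proves (Pol.const c) A ∈ CS → A ∈ M.ev m (Pol.const c)

/-!
If `T` is a mixed successor frame, the only rule whose soundness depends on the frame is (R_D).
From `(m, h)` one reaches a moment `m₂ ∈ h`, either `m` itself or an immediate successor of `m`,
such that every history through `m₂` is `h` or undivided from `h` at `m`. Expansion of presented
proofs and "no new proofs guaranteed" then give `Act_{m₂} = Act(m, h)`, so `□Et` at `m₂` is `Et`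
at `(m, h)`, and the premise of (R_D) at `(m₂, h)` becomes its conclusion at `(m, h)`.

Otherwise there are `m ⊲ m₁` with no immediate successor of `m` below `m₁`, and histories through
`m` that divide at `m`. Take a history `hD` through `m₁`: it has no first moment after `m`, and
some history through `m` is divided from it at `m`. Present a proof `t` from `m` on, and a proof
`s` strictly after `m`, on the histories undivided from `hD` at `m`. The missing first moment
after `m` is what makes `s` obey "no new proofs guaranteed". Then `t` is never guaranteed at `m`,
and `s` is guaranteed wherever `t` is later, so `K (¬□Et ∨ □Es)` holds at `(m, hD)` while
`Et ∧ ¬Es` does too: (R_D) applied to the instance `K A → A` of (A7) fails.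
-/

namespace TemporalFrame

variable {Mo : Type} {T : TemporalFrame Mo} {m m' : Mo} {h h' : Set Mo}

lemma lt_of_lt_of_le {a b c : Mo} (hab : T.lt a b) (hbc : T.le b c) : T.lt a c :=
  ⟨T.le_trans hab.1 hbc, by rintro rfl; exact hab.2 (T.le_antisymm hab.1 hbc)⟩

lemma lt_of_le_of_lt {a b c : Mo} (hab : T.le a b) (hbc : T.lt b c) : T.lt a c :=
  ⟨T.le_trans hab hbc.1, by rintro rfl; exact hbc.2 (T.le_antisymm hbc.1 hab)⟩

lemma IsHistory.le_total (hh : T.IsHistory h) {x y : Mo} (hx : x ∈ h) (hy : y ∈ h) :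
    T.le x y ∨ T.le y x := by
  rcases eq_or_ne x y with rfl | hne
  · exact Or.inl (T.le_refl x)
  · exact hh.1 hx hy hne

lemma IsHistory.mem_of_le (hh : T.IsHistory h) {x y : Mo} (hx : x ∈ h) (hyx : T.le y x) :
    y ∈ h := by
  have hchain : IsChain T.le (insert y h) := hh.1.insert fun z hz _ =>
    (hh.le_total hz hx).elim (fun hzx => (T.no_backward x z y hzx hyx).symm)
      (fun hxz => Or.inl (T.le_trans hyx hxz))
  rw [← hh.2 _ hchain (Set.subset_insert y h)]
  exact Set.mem_insert y h

lemma mem_H_of_le (hh : h ∈ T.H m') (hle : T.le m m') : h ∈ T.H m :=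
  ⟨hh.1, hh.1.mem_of_le hh.2 hle⟩

lemma exists_mem_H_of_le (hle : T.le m m') : ∃ h ∈ T.H m, m' ∈ h := by
  obtain ⟨h, hmax, hsub⟩ := (IsChain.pair hle).exists_maxChain
  exact ⟨h, ⟨⟨hmax.1, fun h' hc hsub' => (hmax.2 hc hsub').symm⟩, hsub (by simp)⟩,
    hsub (by simp)⟩

lemma exists_mem_H (m : Mo) : ∃ h, h ∈ T.H m :=
  (exists_mem_H_of_le (T.le_refl m)).imp fun _ hh => hh.1

lemma Undiv.symm (hu : T.Undiv m h h') : T.Undiv m h' h :=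
  let ⟨y, hy, hyh, hyh'⟩ := hu
  ⟨y, hy, hyh', hyh⟩

lemma Undiv.trans {g : Set Mo} (hh : T.IsHistory h) (hg : T.IsHistory g)
    (hh' : T.IsHistory h') (h1 : T.Undiv m h g) (h2 : T.Undiv m g h') : T.Undiv m h h' := by
  obtain ⟨y1, hy1, hy1h, hy1g⟩ := h1
  obtain ⟨y2, hy2, hy2g, hy2h'⟩ := h2
  rcases hg.le_total hy1g hy2g with hle | hle
  · exact ⟨y1, hy1, hy1h, hh'.mem_of_le hy2h' hle⟩
  · exact ⟨y2, hy2, hh.mem_of_le hy1h hle, hy2h'⟩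

lemma Undiv.of_le (hu : T.Undiv m' h h') (hle : T.le m m') : T.Undiv m h h' :=
  let ⟨y, hy, hyh, hyh'⟩ := hu
  ⟨y, lt_of_le_of_lt hle hy, hyh, hyh'⟩

lemma Undiv.exists_mem_le {hD : Set Mo} (hD_hist : T.IsHistory hD) (hh' : h' ∈ T.H m')
    (hu : T.Undiv m h' hD) (hlt : T.lt m m') : ∃ z ∈ hD, T.lt m z ∧ T.le z m' := by
  obtain ⟨y, hmy, hyh', hyD⟩ := hu
  rcases hh'.1.le_total hyh' hh'.2 with hym' | hm'y
  · exact ⟨y, hyD, hmy, hym'⟩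
  · exact ⟨m', hD_hist.mem_of_le hyD hm'y, hlt, T.le_refl m'⟩

lemma exists_between_of_not_next {z : Mo} (hlt : T.lt m z) (hn : ¬ T.Next m z) :
    ∃ w, T.lt m w ∧ T.lt w z := by
  simp only [Next, not_and, not_forall] at hn
  obtain ⟨w, hwz, hwm⟩ := hn hlt
  refine ⟨w, ⟨(T.no_backward z w m hwz.1 hlt.1).resolve_left hwm, ?_⟩, hwz⟩
  rintro rfl
  exact hwm (T.le_refl m)

lemma le_of_mem_H_of_not_lt {z : Mo} (hh : h ∈ T.H m) (hz : z ∈ h) (hmz : ¬ T.lt m z) :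
    T.le z m := by
  rcases eq_or_ne m z with rfl | hne
  · exact T.le_refl m
  · exact (hh.1.le_total hz hh.2).resolve_right fun hle => hmz ⟨hle, hne⟩

lemma not_lt_of_forall_mem_not_lt (hh : h ∈ T.H m) (hmax : ∀ y ∈ h, ¬ T.lt m y) (y : Mo) :
    ¬ T.lt m y := by
  intro hmy
  have hchain : IsChain T.le (insert y h) := hh.1.1.insert fun z hz _ =>
    Or.inr (T.le_trans (le_of_mem_H_of_not_lt hh hz (hmax z hz)) hmy.1)
  have hyh : y ∈ h := by
    rw [← hh.1.2 _ hchain (Set.subset_insert y h)]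
    exact Set.mem_insert y h
  exact hmax y hyh hmy

-- Both histories are contained in the chain of moments below `m`.
lemma eq_of_mem_H_of_not_lt (hh : h ∈ T.H m) (hh' : h' ∈ T.H m) (htop : ∀ y, ¬ T.lt m y) :
    h' = h := by
  have hchain : IsChain T.le {z | T.le z m} := fun a ha b hb _ => T.no_backward m a b ha hb
  have hsub : ∀ {g}, g ∈ T.H m → g ⊆ {z | T.le z m} := fun hg z hz =>
    le_of_mem_H_of_not_lt hg hz (htop z)
  exact (hh'.1.2 _ hchain (hsub hh')).symm.trans (hh.1.2 _ hchain (hsub hh))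

lemma MixSucc.exists_undivided_successor (hmix : T.MixSucc) (hh : h ∈ T.H m) :
    ∃ m₂ ∈ h, T.le m m₂ ∧ (∀ m'', T.lt m'' m₂ → T.le m'' m) ∧
      ∀ h' ∈ T.H m₂, h' = h ∨ T.Undiv m h' h := by
  by_cases hy : ∃ y ∈ h, T.lt m y
  · obtain ⟨y, hyh, hmy⟩ := hy
    rcases hmix m y with hnext | hundiv
    · obtain ⟨m₂, hm₂y, hnext⟩ := hnext hmy
      have hm₂h : m₂ ∈ h := hh.1.mem_of_le hyh hm₂y
      exact ⟨m₂, hm₂h, hnext.1.1, hnext.2,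
        fun h' hh' => Or.inr ⟨m₂, hnext.1, hh'.2, hm₂h⟩⟩
    · exact ⟨m, hh.2, T.le_refl m, fun _ hlt => hlt.1,
        fun h' hh' => Or.inr (hundiv h' hh' h hh)⟩
  · push Not at hy
    have htop := not_lt_of_forall_mem_not_lt hh hy
    exact ⟨m, hh.2, T.le_refl m, fun _ hlt => hlt.1,
      fun h' hh' => Or.inl (eq_of_mem_H_of_not_lt hh hh' htop)⟩

end TemporalFrame

namespace JstitModel

variable {Mo Ag PVar PConst PropVar : Type} {M : JstitModel Mo Ag PVar PConst PropVar}
  {A B : Form Ag PVar PConst PropVar} {m m' : Mo} {h h' : Set Mo}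

lemma sat_imp : M.Sat (Form.imp A B) m h ↔ (M.Sat A m h → M.Sat B m h) := by
  simp only [Form.imp, Sat, not_and, not_not]

lemma sat_or : M.Sat (Form.or A B) m h ↔ M.Sat A m h ∨ M.Sat B m h := by
  simp only [Form.or, Sat, not_and, not_not]
  tauto

lemma sat_dia : M.Sat (Form.dia A) m h ↔ ∃ h' ∈ M.H m, M.Sat A m h' := by
  simp only [Form.dia, Sat, not_forall, not_not, exists_prop]

lemma sat_bigOr [Inhabited PropVar] {l : List (Form Ag PVar PConst PropVar)} :
    M.Sat (bigOr l) m h ↔ ∃ B ∈ l, M.Sat B m h := by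
  induction l with
  | nil => simp [bigOr, Form.bot, Sat]
  | cons A l ih =>
    cases l with
    | nil => simp [bigOr]
    | cons B L => simp [bigOr, sat_or, ih]

lemma sat_andList_map {ι : Type} (f : ι → Form Ag PVar PConst PropVar) (p : ι) (L : List ι) :
    M.Sat (andList (f p) (L.map f)) m h ↔ ∀ q ∈ p :: L, M.Sat (f q) m h := by
  induction L generalizing p with
  | nil => simp [andList]
  | cons q L ih => simp [andList, Sat, ih]

lemma sat_stit_of_mem_choice {j : Ag} {C : Set (Set Mo)} (hC : C ∈ M.choice m j)
    (hh : h ∈ C) (hh' : h' ∈ C) (hsat : M.Sat (Form.stit j A) m h) :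
    M.Sat (Form.stit j A) m h' := fun h'' C' hC' hh'C' hh''C' =>
  hsat h'' C hC hh (M.choice_disjoint m j C C' hC hC' ⟨h', hh', hh'C'⟩ ▸ hh''C')

lemma valid_of_tautology (hA : Tautology A) : M.Valid A := by
  classical
  intro m h _
  refine of_decide_eq_true (hA (fun B => decide (M.Sat B m h)) (fun B C => ?_) (fun B => ?_))
  · exact Bool.eq_iff_iff.2 (by simp only [Bool.and_eq_true, decide_eq_true_iff]; rfl)
  · exact Bool.eq_iff_iff.2
      (by simp only [Bool.not_eq_true', decide_eq_false_iff_not, decide_eq_true_iff]; rfl)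

lemma valid_a3 {p : Ag × Form Ag PVar PConst PropVar}
    {L : List (Ag × Form Ag PVar PConst PropVar)}
    (hnd : ((p :: L).map Prod.fst).Nodup) :
    M.Valid (Form.imp
        (andList (Form.dia (Form.stit p.1 p.2)) (L.map fun q => Form.dia (Form.stit q.1 q.2)))
        (Form.dia (andList (Form.stit p.1 p.2) (L.map fun q => Form.stit q.1 q.2)))) := by
  intro m h hh
  rw [sat_imp, sat_dia]
  intro hdia
  replace hdia := (sat_andList_map (M := M) (fun q => Form.dia (Form.stit q.1 q.2)) p L).1 hdia
  have hwit : ∀ j, ∃ g ∈ M.H m, ∀ q ∈ p :: L, q.1 = j →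
      M.Sat (Form.stit q.1 q.2) m g := by
    intro j
    by_cases hj : ∃ q ∈ p :: L, q.1 = j
    · obtain ⟨q, hq, rfl⟩ := hj
      obtain ⟨g, hg, hsat⟩ := sat_dia.1 (hdia q hq)
      exact ⟨g, hg, fun q' hq' hq'q => List.inj_on_of_nodup_map hnd hq' hq hq'q ▸ hsat⟩
    · push Not at hj
      exact ⟨h, hh, fun q hq hqj => absurd hqj (hj q hq)⟩
  choose g hg hgsat using hwit
  choose C hC hgC using fun j => M.choice_cover m j (g j) (hg j)
  obtain ⟨h', hh'⟩ := M.independence m C hC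
  rw [Set.mem_iInter] at hh'
  refine ⟨h', M.choice_cell_sub m p.1 _ (hC p.1) (hh' p.1),
    (sat_andList_map (fun q => Form.stit q.1 q.2) p L).2 fun q hq => ?_⟩
  exact sat_stit_of_mem_choice (hC q.1) (hgC q.1) (hh' q.1) (hgsat q.1 q hq rfl)

lemma valid_of_ax (hA : Ax A) : M.Valid A := by
  induction hA with
  | a0 hA => exact valid_of_tautology hA
  | a3 hnd => exact valid_a3 hnd
  | @stitT j A =>
    intro m h hh
    obtain ⟨C, hC, hhC⟩ := M.choice_cover m j h hh
    exact sat_imp.2 fun hsat => hsat h C hC hhC hhC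
  | @stit4 j A =>
    intro m h _
    exact sat_imp.2 fun hsat h' C hC hhC hh'C => sat_stit_of_mem_choice hC hhC hh'C hsat
  | @stit5 j A =>
    intro m h _
    exact sat_imp.2 fun hsat h' C hC hhC hh'C hsat' =>
      hsat (sat_stit_of_mem_choice hC hh'C hhC hsat')
  | a2 =>
    intro m h _
    exact sat_imp.2 fun hsat h' C hC _ hh'C => hsat h' (M.choice_cell_sub m _ C hC hh'C)
  | @a4 s t A B =>
    intro m h _
    simp only [sat_imp, Sat]
    exact fun h1 h2 => ⟨M.ev_app m s t A B h1.1 h2.1, fun m' h' hRe hh' =>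
      h1.2 m' h' hRe hh' (h2.2 m' h' hRe hh')⟩
  | @a5 t A =>
    intro m h _
    simp only [sat_imp, Sat]
    exact fun h1 => ⟨⟨M.ev_bang m t A h1.1, fun m' _ hRe _ => ⟨M.ev_mono m m' t hRe h1.1,
      fun m'' h'' hRe' hh'' => h1.2 m'' h'' (M.Re_trans hRe hRe') hh''⟩⟩,
      fun m' h' hR hh' => h1.2 m' h' (M.R_sub_Re hR) hh'⟩
  | @a6 s t A =>
    intro m h _
    simp only [sat_imp, sat_or, Sat]
    rintro (h1 | h1)
    · exact ⟨M.ev_sum_left m s t h1.1, h1.2⟩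
    · exact ⟨M.ev_sum_right m s t h1.1, h1.2⟩
  | knowT =>
    intro m h hh
    exact sat_imp.2 fun hsat => hsat m h (M.R_refl m) hh
  | know4 =>
    intro m h _
    exact sat_imp.2 fun hsat m' _ hR _ m'' h'' hR' hh'' => hsat m'' h'' (M.R_trans hR hR') hh''
  | @a9 t =>
    intro m h _
    exact sat_imp.2 fun hsat m' _ hR _ h'' hh'' =>
      M.transparent m m' t (M.R_sub_Re hR) hsat h'' hh''
  | _ =>
    intro m h _
    simp only [sat_imp, Sat]
    aesop

lemma valid_of_constIter {CS : Set (Form Ag PVar PConst PropVar)} (hCS : IsConstSpec CS)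
    (hN : CSNormal CS M) (hB : ConstIter A) (hBCS : A ∈ CS) : M.Valid A := by
  induction hB with
  | @base c A hA =>
    exact fun m _ _ => ⟨hN c m A hBCS, fun m' h' _ hh' => valid_of_ax hA m' h' hh'⟩
  | @step c B hB ih =>
    have hB' : B ∈ CS := by
      cases hB <;> exact hCS.2 _ _ _ hBCS
    exact fun m _ _ => ⟨hN c m B hBCS, fun m' h' _ hh' => ih hB' m' h' hh'⟩

lemma act_subset_of_le (hle : M.le m' m) (hh : h ∈ M.H m) : M.act m' h ⊆ M.act m h := by
  rcases eq_or_ne m' m with rfl | hne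
  · exact subset_rfl
  · exact M.expansion m m' h ⟨hle, hne⟩ hh

lemma exists_actM_eq_act_of_mixSucc (hmix : M.MixSucc) (hh : h ∈ M.H m) :
    ∃ m₂, M.le m m₂ ∧ h ∈ M.H m₂ ∧ M.ActM m₂ = M.act m h := by
  obtain ⟨m₂, hm₂h, hle, hprev, hund⟩ := hmix.exists_undivided_successor hh
  have hact : ∀ h' ∈ M.H m₂, h' ∈ M.H m ∧ M.act m h' = M.act m h := fun h' hh' =>
    ⟨TemporalFrame.mem_H_of_le hh' hle, (hund h' hh').elim (fun e => e ▸ rfl)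
      (M.divide m h' h (TemporalFrame.mem_H_of_le hh' hle) hh)⟩
  refine ⟨m₂, hle, ⟨hh.1, hm₂h⟩,
    Set.Subset.antisymm (fun t ht => ?_) (fun t ht h' hh' => ?_)⟩
  · obtain ⟨m'', h'', hlt, hh'', ht''⟩ := M.no_new m₂ t ht
    rw [← (hact h'' hh'').2]
    exact act_subset_of_le (hprev m'' hlt) (hact h'' hh'').1 ht''
  · exact act_subset_of_le hle hh' ((hact h' hh').2 ▸ ht)

lemma valid_rd [Inhabited PropVar] (hmix : M.MixSucc) {ts ss : List (Pol PVar PConst)}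
    (hprem : M.Valid (Form.imp (Form.know A)
        (bigOr ((ts.map fun t => Form.neg (Form.box (Form.ann t))) ++
                (ss.map fun s => Form.box (Form.ann s)))))) :
    M.Valid (Form.imp (Form.know A)
        (bigOr ((ts.map fun t => Form.neg (Form.ann t)) ++ (ss.map fun s => Form.ann s)))) := by
  intro m h hh
  refine sat_imp.2 fun hK => ?_
  obtain ⟨m₂, hle, hh₂, hact⟩ := exists_actM_eq_act_of_mixSucc hmix hh
  have hK₂ : M.Sat (Form.know A) m₂ h := fun m' h' hR hh' =>
    hK m' h' (M.R_trans (M.le_sub_R hle) hR) hh'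
  obtain ⟨B, hB, hBsat⟩ := sat_bigOr.1 (sat_imp.1 (hprem m₂ h hh₂) hK₂)
  rw [sat_bigOr]
  rcases List.mem_append.1 hB with hB | hB
  · obtain ⟨t, ht, rfl⟩ := List.mem_map.1 hB
    refine ⟨_, List.mem_append_left _ (List.mem_map_of_mem ht), fun htm => hBsat ?_⟩
    exact (hact ▸ htm : t ∈ M.ActM m₂)
  · obtain ⟨s, hs, rfl⟩ := List.mem_map.1 hB
    refine ⟨_, List.mem_append_right _ (List.mem_map_of_mem hs), ?_⟩
    exact (hact ▸ hBsat : s ∈ M.act m h)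

lemma valid_of_proves [Inhabited PropVar] {CS : Set (Form Ag PVar PConst PropVar)}
    (hmix : M.MixSucc) (hCS : IsConstSpec CS) (hN : CSNormal CS M) (hA : Proves CS A) :
    M.Valid A := by
  induction hA with
  | ax hA => exact valid_of_ax hA
  | mp _ _ ih₁ ih₂ => exact fun m h hh => sat_imp.1 (ih₁ m h hh) (ih₂ m h hh)
  | nec _ ih => exact fun _ _ _ m' h' _ hh' => ih m' h' hh'
  | rd _ _ ih => exact valid_rd hmix ih
  | rcs hB => exact valid_of_constIter hCS hN (hCS.1 _ hB) hB

end JstitModel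

namespace TemporalFrame

variable {Mo PVar PConst : Type} {T : TemporalFrame Mo} {m m' : Mo} {hD : Set Mo}
  {t s : Pol PVar PConst}

variable (T) in
def trivialJstitFrame (Ag : Type) : JstitFrame Mo Ag where
  toTemporalFrame := T
  choice m _ := {T.H m}
  choice_cell_nonempty m _ _ hC := hC ▸ T.exists_mem_H m
  choice_cell_sub _ _ _ hC := hC.subset
  choice_cover m _ _ hh := ⟨T.H m, rfl, hh⟩
  choice_disjoint _ _ _ _ hC hC' _ := hC.trans hC'.symm
  no_choice_undiv _ _ _ _ _ hh' _ _ hC _ := hC ▸ hh'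
  independence m _ hf :=
    let ⟨h, hh⟩ := T.exists_mem_H m
    ⟨h, Set.mem_iInter.2 fun j => (hf j).symm ▸ hh⟩
  R := T.le
  Re := T.le
  R_refl := T.le_refl
  R_trans := T.le_trans
  Re_refl := T.le_refl
  Re_trans := T.le_trans
  R_sub_Re := id
  le_sub_R := id

variable (T) in
def gapAct (m : Mo) (hD : Set Mo) (t s : Pol PVar PConst) (m' : Mo) (h' : Set Mo) :
    Set (Pol PVar PConst) :=
  {u | T.Undiv m h' hD ∧ (u = t ∧ T.le m m' ∨ u = s ∧ T.lt m m')}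

lemma gapAct_mono {m'' : Mo} {h' : Set Mo} (hle : T.le m' m'') :
    T.gapAct m hD t s m' h' ⊆ T.gapAct m hD t s m'' h' := by
  rintro u ⟨hu, ⟨rfl, hmm'⟩ | ⟨rfl, hmm'⟩⟩
  · exact ⟨hu, Or.inl ⟨rfl, T.le_trans hmm' hle⟩⟩
  · exact ⟨hu, Or.inr ⟨rfl, lt_of_lt_of_le hmm' hle⟩⟩

lemma gapAct_eq_of_undiv (hD_hist : T.IsHistory hD) {h₁ h₂ : Set Mo} (hh₁ : h₁ ∈ T.H m')
    (hh₂ : h₂ ∈ T.H m') (hu : T.Undiv m' h₁ h₂) :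
    T.gapAct m hD t s m' h₁ = T.gapAct m hD t s m' h₂ := by
  ext u
  suffices T.le m m' → (T.Undiv m h₁ hD ↔ T.Undiv m h₂ hD) by
    refine and_congr_left fun hP => this ?_
    rcases hP with ⟨_, hle⟩ | ⟨_, hlt⟩
    exacts [hle, hlt.1]
  intro hle
  have hu₁₂ := hu.of_le hle
  exact ⟨(hu₁₂.symm.trans hh₂.1 hh₁.1 hD_hist ·),
    (hu₁₂.trans hh₁.1 hh₂.1 hD_hist ·)⟩

lemma lt_of_forall_undiv (hsplit : ∃ g ∈ T.H m, ¬ T.Undiv m g hD) (hle : T.le m m')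
    (hall : ∀ h' ∈ T.H m', T.Undiv m h' hD) : T.lt m m' := by
  refine ⟨hle, ?_⟩
  rintro rfl
  obtain ⟨g, hg, hgD⟩ := hsplit
  exact hgD (hall g hg)

lemma gapAct_no_new (hD_hist : T.IsHistory hD) (hsplit : ∃ g ∈ T.H m, ¬ T.Undiv m g hD)
    (hdense : ∀ v ∈ hD, T.lt m v → ∃ w, T.lt m w ∧ T.lt w v) {u : Pol PVar PConst}
    (hall : ∀ h' ∈ T.H m', u ∈ T.gapAct m hD t s m' h') :
    ∃ m'' h', T.lt m'' m' ∧ h' ∈ T.H m' ∧ u ∈ T.gapAct m hD t s m'' h' := by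
  obtain ⟨h₀, hh₀⟩ := T.exists_mem_H m'
  obtain ⟨hu₀, ⟨rfl, hle⟩ | ⟨rfl, hlt⟩⟩ := hall h₀ hh₀
  · have hlt := lt_of_forall_undiv hsplit hle fun h' hh' => (hall h' hh').1
    exact ⟨m, h₀, hlt, hh₀, hu₀, Or.inl ⟨rfl, T.le_refl m⟩⟩
  · obtain ⟨z, hzD, hmz, hzm'⟩ := hu₀.exists_mem_le hD_hist hh₀ hlt
    obtain ⟨w, hmw, hwz⟩ := hdense z hzD hmz
    exact ⟨w, h₀, lt_of_lt_of_le hwz hzm', hh₀, hu₀, Or.inr ⟨rfl, hmw⟩⟩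

variable (T) in
def gapModel (Ag PropVar : Type) (m : Mo) (hD : Set Mo) (t s : Pol PVar PConst)
    (hD_hist : T.IsHistory hD) (hsplit : ∃ g ∈ T.H m, ¬ T.Undiv m g hD)
    (hdense : ∀ v ∈ hD, T.lt m v → ∃ w, T.lt m w ∧ T.lt w v) :
    JstitModel Mo Ag PVar PConst PropVar where
  toJstitFrame := T.trivialJstitFrame Ag
  act := T.gapAct m hD t s
  ev _ _ := Set.univ
  val _ := ∅
  ev_mono _ _ _ _ := subset_rfl
  ev_app _ _ _ _ _ _ _ := trivial
  ev_sum_left _ _ _ := Set.subset_univ _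
  ev_sum_right _ _ _ := Set.subset_univ _
  ev_bang _ _ _ _ := trivial
  expansion _ _ _ hlt _ := gapAct_mono hlt.1
  no_new _ _ hall := gapAct_no_new hD_hist hsplit hdense hall
  divide _ _ _ hh₁ hh₂ hu := gapAct_eq_of_undiv hD_hist hh₁ hh₂ hu
  transparent _ _ _ hle hall h'' hh'' := gapAct_mono hle (hall h'' (mem_H_of_le hh'' hle))

lemma gapModel_not_valid {Ag PropVar : Type} [Inhabited PropVar] (hD_hist : T.IsHistory hD)
    (hsplit : ∃ g ∈ T.H m, ¬ T.Undiv m g hD)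
    (hdense : ∀ v ∈ hD, T.lt m v → ∃ w, T.lt m w ∧ T.lt w v) (hDD : T.Undiv m hD hD)
    (hts : t ≠ s) :
    ¬ (T.gapModel Ag PropVar m hD t s hD_hist hsplit hdense).Valid
        (Form.imp (Form.know (Form.or (Form.neg (Form.box (Form.ann t))) (Form.box (Form.ann s))))
          (Form.or (Form.neg (Form.ann t)) (Form.ann s))) := by
  set M := T.gapModel Ag PropVar m hD t s hD_hist hsplit hdense
  intro hvalid
  have hDm : hD ∈ T.H m :=
    let ⟨_, hmy, hyD, _⟩ := hDD
    ⟨hD_hist, hD_hist.mem_of_le hyD hmy.1⟩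
  have hK : M.Sat (Form.know (Form.or (Form.neg (Form.box (Form.ann t))) (Form.box (Form.ann s))))
      m hD := by
    intro m' h' hle _
    refine JstitModel.sat_or.2 (or_iff_not_imp_left.2 fun hbox h'' hh'' => ?_)
    have hall : ∀ g ∈ T.H m', t ∈ T.gapAct m hD t s m' g := not_not.1 hbox
    exact ⟨(hall h'' hh'').1,
      Or.inr ⟨rfl, lt_of_forall_undiv hsplit hle fun g hg => (hall g hg).1⟩⟩
  rcases JstitModel.sat_or.1 (JstitModel.sat_imp.1 (hvalid m hD hDm) hK) with
    hnt | ⟨_, hst | hss⟩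
  · exact hnt ⟨hDD, Or.inl ⟨rfl, T.le_refl m⟩⟩
  · exact hts hst.1.symm
  · exact hss.2.2 rfl

lemma exists_gap_of_not_mixSucc (hmix : ¬ T.MixSucc) :
    ∃ m hD, T.IsHistory hD ∧ (∃ g ∈ T.H m, ¬ T.Undiv m g hD) ∧
      (∀ v ∈ hD, T.lt m v → ∃ w, T.lt m w ∧ T.lt w v) ∧ T.Undiv m hD hD := by
  simp only [MixSucc, not_forall, not_or] at hmix
  obtain ⟨m, m₁, hnext, hdiv⟩ := hmix
  obtain ⟨hmm₁, hnext⟩ := hnext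
  obtain ⟨hD, hDm, hm₁D⟩ := exists_mem_H_of_le hmm₁.1
  refine ⟨m, hD, hDm.1, ?_, fun v hvD hmv => ?_, ⟨m₁, hmm₁, hm₁D, hm₁D⟩⟩
  · by_contra! hall
    obtain ⟨h, hh, g, hg, hhg⟩ := hdiv
    exact hhg (Undiv.trans hh.1 hDm.1 hg.1 (hall h hh) (hall g hg).symm)
  · rcases hDm.1.le_total hvD hm₁D with hvm₁ | hm₁v
    · exact exists_between_of_not_next hmv fun hn => hnext ⟨v, hvm₁, hn⟩
    · obtain ⟨w, hmw, hwm₁⟩ :=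
        exists_between_of_not_next hmm₁ fun hn => hnext ⟨m₁, T.le_refl m₁, hn⟩
      exact ⟨w, hmw, lt_of_lt_of_le hwm₁ hm₁v⟩

end TemporalFrame

theorem stmt12_general {Mo Ag PVar PConst PropVar : Type}
    [Infinite PVar] [Inhabited PropVar]
    (T : TemporalFrame Mo)
    (CS : Set (Form Ag PVar PConst PropVar)) (hCS : IsConstSpec CS) :
    (∀ M : JstitModel Mo Ag PVar PConst PropVar,
        M.toTemporalFrame = T → CSNormal CS M →
        ∀ A : Form Ag PVar PConst PropVar, Proves CS A → M.Valid A) ↔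
      T.MixSucc := by
  refine ⟨fun hval => ?_,
    fun hmix M hM hN A hA => JstitModel.valid_of_proves (hM ▸ hmix) hCS hN hA⟩
  by_contra hmix
  obtain ⟨m, hD, hD_hist, hsplit, hdense, hDD⟩ := T.exists_gap_of_not_mixSucc hmix
  obtain ⟨x⟩ := (inferInstance : Nonempty PVar)
  have hts : (Pol.var x : Pol PVar PConst) ≠ Pol.bang (Pol.var x) := nofun
  refine TemporalFrame.gapModel_not_valid hD_hist hsplit hdense hDD hts
    (hval (T.gapModel Ag PropVar m hD _ _ hD_hist hsplit hdense) rfl (fun _ _ _ _ => trivial) _ ?_)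
  exact Proves.rd (ts := [Pol.var x]) (ss := [Pol.bang (Pol.var x)]) (by simp)
    (Proves.ax Ax.knowT)

/-- Theorem 4: every CS-normal jstit model based on a temporal frame `T`
validates all theorems of Σ_D(CS) iff `T` is a mixed successor frame. -/
theorem stmt12 {Mo Ag PVar PConst PropVar : Type} [Finite Ag]
    [Countable PVar] [Infinite PVar] [Countable PConst] [Infinite PConst]
    [Countable PropVar] [Infinite PropVar] [Inhabited PropVar]
    (T : TemporalFrame Mo)
    (CS : Set (Form Ag PVar PConst PropVar)) (hCS : IsConstSpec CS) :
    (∀ M : JstitModel Mo Ag PVar PConst PropVar,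
        M.toTemporalFrame = T → CSNormal CS M →
        ∀ A : Form Ag PVar PConst PropVar, Proves CS A → M.Valid A) ↔
      T.MixSucc :=
  stmt12_general T CS hCS
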